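/- Existence of an optimal conductivity: assume b lies in the range of E. Then there exists μ* ∈ ℝ^m with μ*_e ≥ 0 for all e such that ℒ(μ*) is finite and ℒ(μ*) ≤ ℒ(μ) for every μ ∈ ℝ^m with nonnegative entries; i.e., the functional ℒ attains its minimum over the nonnegative orthant ℝ₊^m. -/

import Mathlib

/-!
The minimum of `ℒ` is the least weighted `ℓ¹` cost `w ⬝ᵥ |q|` of a flow `q` with `E q = b`, and it
is attained at the modulus `|q*|` of a cheapest flow. With `v = Eᵀ u`, the pointwise AM–GM bound
`μ_e |v_e| ≤ ½ μ_e v_e² / w_e + ½ w_e μ_e` does both halves. For a flow `q` it gives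
`bᵀu = qᵀv ≤ ½ uᵀ L[|q|] u + ½ w ⬝ᵥ |q|`, hence `ℒ(|q|) ≤ w ⬝ᵥ |q|`. Conversely, for `μ ≥ 0`
either `L[μ] u = b` for some `u`, and then `μ W⁻¹ Eᵀ u` is a flow of cost at most
`bᵀu - ½ uᵀ L[μ] u + ½ wᵀμ ≤ ℒ(μ)`; or `b` is not in the range of the symmetric matrix `L[μ]`,
so some `z` in its kernel has `bᵀz ≠ 0` and `ℰ(μ) = ∞` along the line through `z`.
-/

open Matrix

namespace Matrix

variable {n m : Type*}

theorem exists_mulVec_eq_zero_dotProduct_ne_zero [Fintype n] [DecidableEq n] {A : Matrix n n ℝ}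
    (hA : A.IsSymm) {b : n → ℝ} (hb : b ∉ LinearMap.range A.mulVecLin) :
    ∃ z, A *ᵥ z = 0 ∧ b ⬝ᵥ z ≠ 0 := by
  obtain ⟨φ, hφb, hφA⟩ := Submodule.exists_dual_map_eq_bot_of_notMem hb inferInstance
  set z := (dotProductEquiv ℝ n).symm φ
  have hφ : ∀ y, φ y = z ⬝ᵥ y := fun y => by
    conv_lhs => rw [← (dotProductEquiv ℝ n).apply_symm_apply φ]
    rfl
  have hzA : ∀ x, z ᵥ* A ⬝ᵥ x = 0 := fun x => by
    rw [← dotProduct_mulVec, ← hφ, ← Submodule.mem_bot ℝ, ← hφA]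
    exact Submodule.mem_map_of_mem (LinearMap.mem_range_self _ x)
  refine ⟨z, ?_, by rwa [dotProduct_comm, ← hφ]⟩
  rw [← vecMul_transpose, hA.eq]
  exact dotProduct_self_eq_zero.1 (hzA _)

theorem isSymm_mul_diagonal_mul_transpose [Fintype m] [DecidableEq m] (E : Matrix n m ℝ)
    (d : m → ℝ) : (E * diagonal d * Eᵀ).IsSymm := by
  simp [IsSymm, transpose_mul, Matrix.mul_assoc]

theorem dotProduct_mul_diagonal_mul_transpose_mulVec [Fintype n] [Fintype m] [DecidableEq m]
    (E : Matrix n m ℝ) (d : m → ℝ) (u : n → ℝ) :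
    u ⬝ᵥ (E * diagonal d * Eᵀ) *ᵥ u = ∑ e, d e * (Eᵀ *ᵥ u) e ^ 2 := by
  rw [← mulVec_mulVec, ← mulVec_mulVec, dotProduct_mulVec, ← mulVec_transpose, dotProduct]
  simp only [mulVec_diagonal]
  exact Finset.sum_congr rfl fun e _ => by ring

theorem diagonal_mul_inv_diagonal {K : Type*} [Field K] [Fintype m] [DecidableEq m]
    (μ : m → K) {w : m → K} (hw : ∀ e, w e ≠ 0) :
    diagonal μ * (diagonal w)⁻¹ = diagonal (μ / w) := by
  have hinv : diagonal w * diagonal w⁻¹ = 1 := by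
    rw [diagonal_mul_diagonal, ← diagonal_one]
    exact congrArg diagonal (funext fun e => mul_inv_cancel₀ (hw e))
  rw [inv_eq_right_inv hinv, diagonal_mul_diagonal, div_eq_mul_inv]
  rfl

end Matrix

theorem sum_mul_abs_le_half_add_half {m : Type*} [Fintype m] {μ w : m → ℝ} (hμ : 0 ≤ μ)
    (hw : ∀ e, 0 < w e) (v : m → ℝ) :
    ∑ e, μ e * |v e| ≤ 1/2 * ∑ e, (μ / w) e * v e ^ 2 + 1/2 * (w ⬝ᵥ μ) := by
  rw [dotProduct, Finset.mul_sum, Finset.mul_sum, ← Finset.sum_add_distrib]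
  refine Finset.sum_le_sum fun e _ => ?_
  have hsq : (μ / w) e * v e ^ 2 + w e * μ e - 2 * (μ e * |v e|) =
      (μ / w) e * (|v e| - w e) ^ 2 := by
    have := (hw e).ne'
    rw [Pi.div_apply, ← sq_abs (v e)]
    field_simp
    ring
  have hnonneg := mul_nonneg (div_nonneg (hμ e) (hw e).le) (sq_nonneg (|v e| - w e))
  rw [← Pi.div_apply] at hnonneg
  linarith

noncomputable def jouleEnergy {n : Type*} [Fintype n] (A : Matrix n n ℝ) (b : n → ℝ) : EReal :=
  ⨆ u : n → ℝ, ((b ⬝ᵥ u - (1/2) * (u ⬝ᵥ A *ᵥ u) : ℝ) : EReal)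

theorem jouleEnergy_eq_top_of_notMem_range {n : Type*} [Fintype n] [DecidableEq n]
    {A : Matrix n n ℝ} (hA : A.IsSymm) {b : n → ℝ} (hb : b ∉ LinearMap.range A.mulVecLin) :
    jouleEnergy A b = ⊤ := by
  obtain ⟨z, hAz, hbz⟩ := exists_mulVec_eq_zero_dotProduct_ne_zero hA hb
  rw [EReal.eq_top_iff_forall_lt]
  intro y
  refine lt_of_lt_of_le ?_ (le_iSup _ (((y + 1) / (b ⬝ᵥ z)) • z))
  rw [EReal.coe_lt_coe_iff, mulVec_smul, hAz, smul_zero, dotProduct_zero, dotProduct_smul,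
    smul_eq_mul, div_mul_cancel₀ _ hbz]
  linarith

theorem norm_le_sum_inv_mul_dotProduct_abs {m : Type*} [Fintype m] {w : m → ℝ}
    (hw : ∀ e, 0 < w e) (q : m → ℝ) : ‖q‖ ≤ (∑ e, (w e)⁻¹) * (w ⬝ᵥ |q|) := by
  have hinv : ∀ e, 0 ≤ (w e)⁻¹ := fun e => (inv_pos.2 (hw e)).le
  have hcost : 0 ≤ w ⬝ᵥ |q| := dotProduct_nonneg_of_nonneg (fun e => (hw e).le) (abs_nonneg q)
  refine (pi_norm_le_iff_of_nonneg (mul_nonneg (Finset.sum_nonneg fun e _ => hinv e) hcost)).2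
    fun e => ?_
  calc ‖q e‖ = (w e)⁻¹ * (w e * |q e|) := by
        rw [Real.norm_eq_abs, inv_mul_cancel_left₀ (hw e).ne']
    _ ≤ (w e)⁻¹ * (w ⬝ᵥ |q|) := mul_le_mul_of_nonneg_left
        (Finset.single_le_sum (f := fun e => w e * |q| e)
          (fun i _ => mul_nonneg (hw i).le (abs_nonneg _)) (Finset.mem_univ e)) (hinv e)
    _ ≤ (∑ e, (w e)⁻¹) * (w ⬝ᵥ |q|) := mul_le_mul_of_nonneg_right
        (Finset.single_le_sum (fun i _ => hinv i) (Finset.mem_univ e)) hcost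

theorem IsClosed.exists_isMinOn_dotProduct_abs {m : Type*} [Fintype m] {w : m → ℝ}
    (hw : ∀ e, 0 < w e) {S : Set (m → ℝ)} (hS : IsClosed S) (hne : S.Nonempty) :
    ∃ q ∈ S, IsMinOn (fun q => w ⬝ᵥ |q|) S q := by
  obtain ⟨q₀, hq₀⟩ := hne
  have hcont : Continuous fun q : m → ℝ => w ⬝ᵥ |q| :=
    continuous_const.dotProduct (continuous_pi fun e => (continuous_apply e).abs)
  refine hcont.continuousOn.exists_isMinOn'
    hS hq₀ (Filter.Eventually.filter_mono inf_le_left ?_)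
  refine Filter.mem_cocompact.2 ⟨Metric.closedBall 0 ((∑ e, (w e)⁻¹) * (w ⬝ᵥ |q₀|)),
    isCompact_closedBall _ _, fun q hq => ?_⟩
  by_contra hlt
  rw [Set.mem_ofPred_eq, not_le] at hlt
  refine hq (mem_closedBall_zero_iff.2 ((norm_le_sum_inv_mul_dotProduct_abs hw q).trans ?_))
  exact mul_le_mul_of_nonneg_left hlt.le (Finset.sum_nonneg fun e _ => (inv_pos.2 (hw e)).le)

section Conductivity

variable {n m : Type*} [Fintype n] [Fintype m] [DecidableEq m]
  (E : Matrix n m ℝ) (w : m → ℝ) (b : n → ℝ)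

noncomputable def conductivityFunctional (μ : m → ℝ) : EReal :=
  jouleEnergy (E * diagonal (μ / w) * Eᵀ) b + ((1/2 * (w ⬝ᵥ μ) : ℝ) : EReal)

variable {E w b}

theorem conductivityFunctional_abs_le (hw : ∀ e, 0 < w e) {q : m → ℝ} (hq : E *ᵥ q = b) :
    conductivityFunctional E w b |q| ≤ ((w ⬝ᵥ |q| : ℝ) : EReal) := by
  have henergy : jouleEnergy (E * diagonal (|q| / w) * Eᵀ) b ≤
      ((1/2 * (w ⬝ᵥ |q|) : ℝ) : EReal) := by
    refine iSup_le fun u => EReal.coe_le_coe_iff.2 ?_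
    have hflux : b ⬝ᵥ u ≤ ∑ e, |q| e * |(Eᵀ *ᵥ u) e| := by
      rw [← hq, dotProduct_comm, dotProduct_mulVec, ← mulVec_transpose, dotProduct_comm]
      exact Finset.sum_le_sum fun e _ => (le_abs_self _).trans (abs_mul _ _).le
    rw [dotProduct_mul_diagonal_mul_transpose_mulVec]
    linarith [sum_mul_abs_le_half_add_half (abs_nonneg q) hw (Eᵀ *ᵥ u)]
  calc conductivityFunctional E w b |q|
      ≤ ((1/2 * (w ⬝ᵥ |q|) : ℝ) : EReal) + ((1/2 * (w ⬝ᵥ |q|) : ℝ) : EReal) :=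
        add_le_add henergy le_rfl
    _ = ((w ⬝ᵥ |q| : ℝ) : EReal) := by rw [← EReal.coe_add]; ring_nf

theorem le_conductivityFunctional [DecidableEq n] (hw : ∀ e, 0 < w e) {μ : m → ℝ}
    (hμ : 0 ≤ μ) {F : ℝ} (hF : ∀ q, E *ᵥ q = b → F ≤ w ⬝ᵥ |q|) :
    (F : EReal) ≤ conductivityFunctional E w b μ := by
  set A := E * diagonal (μ / w) * Eᵀ
  by_cases hb : b ∈ LinearMap.range A.mulVecLin
  · obtain ⟨u, hu⟩ : ∃ u, A *ᵥ u = b := hb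
    set v := Eᵀ *ᵥ u
    have hflow : E *ᵥ (μ / w * v) = b := by
      simp only [← hu, A, ← mulVec_mulVec]
      congr 1
      funext e
      rw [mulVec_diagonal, Pi.mul_apply]
    have hcost : w ⬝ᵥ |μ / w * v| = ∑ e, μ e * |v e| := by
      refine Finset.sum_congr rfl fun e _ => ?_
      rw [Pi.abs_apply, Pi.mul_apply, Pi.div_apply, abs_mul, abs_div, abs_of_nonneg (hμ e),
        abs_of_pos (hw e), ← mul_assoc, mul_div_cancel₀ _ (hw e).ne']
    have hval : b ⬝ᵥ u - 1/2 * (u ⬝ᵥ A *ᵥ u) = 1/2 * ∑ e, (μ / w) e * v e ^ 2 := by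
      rw [← hu, dotProduct_comm, dotProduct_mul_diagonal_mul_transpose_mulVec]
      ring
    calc (F : EReal) ≤ ((b ⬝ᵥ u - 1/2 * (u ⬝ᵥ A *ᵥ u) : ℝ) : EReal)
          + ((1/2 * (w ⬝ᵥ μ) : ℝ) : EReal) := by
          rw [← EReal.coe_add, EReal.coe_le_coe_iff, hval]
          linarith [hF _ hflow, sum_mul_abs_le_half_add_half hμ hw v]
      _ ≤ conductivityFunctional E w b μ :=
          add_le_add (le_iSup (fun u : n → ℝ =>
            ((b ⬝ᵥ u - 1/2 * (u ⬝ᵥ A *ᵥ u) : ℝ) : EReal)) u) le_rfl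
  · rw [conductivityFunctional, jouleEnergy_eq_top_of_notMem_range
      (isSymm_mul_diagonal_mul_transpose E _) hb, EReal.top_add_coe]
    exact le_top

end Conductivity

theorem optimal_conductivity_exists_general {n m : ℕ}
    (E : Matrix (Fin n) (Fin m) ℝ) (w : Fin m → ℝ) (hw : ∀ e, 0 < w e)
    (b : Fin n → ℝ)
    (G : Matrix (Fin m) (Fin n) ℝ) (hG : G = (Matrix.diagonal w)⁻¹ * Eᵀ)
    (L : (Fin m → ℝ) → Matrix (Fin n) (Fin n) ℝ)
    (hL : ∀ μ, L μ = E * Matrix.diagonal μ * G)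
    (Lyap : (Fin m → ℝ) → EReal)
    (hLyap : ∀ μ, Lyap μ =
      (⨆ u : Fin n → ℝ, ((b ⬝ᵥ u - (1/2) * (u ⬝ᵥ (L μ).mulVec u) : ℝ) : EReal))
        + (((1/2) * (w ⬝ᵥ μ) : ℝ) : EReal))
    (hb : ∃ q₀ : Fin m → ℝ, E.mulVec q₀ = b) :
    ∃ μs : Fin m → ℝ, (∀ e, 0 ≤ μs e) ∧ Lyap μs ≠ ⊤ ∧ Lyap μs ≠ ⊥ ∧
      ∀ μ : Fin m → ℝ, (∀ e, 0 ≤ μ e) → Lyap μs ≤ Lyap μ := by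
  have hLyap_eq : Lyap = conductivityFunctional E w b := funext fun μ => by
    rw [hLyap, hL, hG, ← Matrix.mul_assoc, Matrix.mul_assoc E,
      diagonal_mul_inv_diagonal μ fun e => (hw e).ne']
    rfl
  subst hLyap_eq
  have hflows : IsClosed {q | E *ᵥ q = b} :=
    isClosed_eq (continuous_const.matrix_mulVec continuous_id) continuous_const
  obtain ⟨qs, hqs, hmin⟩ := hflows.exists_isMinOn_dotProduct_abs hw hb
  have upper := conductivityFunctional_abs_le hw hqs
  have lower : ∀ μ : Fin m → ℝ, 0 ≤ μ →
      ((w ⬝ᵥ |qs| : ℝ) : EReal) ≤ conductivityFunctional E w b μ :=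
    fun μ hμ => le_conductivityFunctional hw hμ hmin
  exact ⟨|qs|, abs_nonneg qs, ne_top_of_le_ne_top (EReal.coe_ne_top _) upper,
    ne_bot_of_le_ne_bot (EReal.coe_ne_bot _) (lower _ (abs_nonneg qs)),
    fun μ hμ => upper.trans (lower μ hμ)⟩

/-- Existence of an optimal conductivity: if `b` lies in the range of `E`, then the
functional `ℒ(μ) = ℰ(μ) + ½ wᵀμ` attains a finite minimum over the nonnegative orthant.
Here `G = W⁻¹Eᵀ`, `L[μ] = E Diag(μ) G` and `ℰ(μ) = sup_u (bᵀu − ½ uᵀ L[μ] u)` is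
valued in `ℝ ∪ {+∞}`, modelled by `EReal`. -/
theorem optimal_conductivity_exists {n m : ℕ} (hn : 0 < n) (hm : 0 < m)
    (E : Matrix (Fin n) (Fin m) ℝ) (w : Fin m → ℝ) (hw : ∀ e, 0 < w e)
    (b : Fin n → ℝ)
    (G : Matrix (Fin m) (Fin n) ℝ) (hG : G = (Matrix.diagonal w)⁻¹ * Eᵀ)
    (L : (Fin m → ℝ) → Matrix (Fin n) (Fin n) ℝ)
    (hL : ∀ μ, L μ = E * Matrix.diagonal μ * G)
    (Lyap : (Fin m → ℝ) → EReal)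
    (hLyap : ∀ μ, Lyap μ =
      (⨆ u : Fin n → ℝ, ((b ⬝ᵥ u - (1/2) * (u ⬝ᵥ (L μ).mulVec u) : ℝ) : EReal))
        + (((1/2) * (w ⬝ᵥ μ) : ℝ) : EReal))
    (hb : ∃ q₀ : Fin m → ℝ, E.mulVec q₀ = b) :
    ∃ μs : Fin m → ℝ, (∀ e, 0 ≤ μs e) ∧ Lyap μs ≠ ⊤ ∧ Lyap μs ≠ ⊥ ∧
      ∀ μ : Fin m → ℝ, (∀ e, 0 ≤ μ e) → Lyap μs ≤ Lyap μ :=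
  optimal_conductivity_exists_general E w hw b G hG L hL Lyap hLyap hb
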